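/- arXiv:1409.5959 — 4 statements merged into one kernel-verified Lean document; each statement's English description precedes it below -/
import Mathlib

section
/- For all n ≥ 5, the automorphism group of the modified bubble-sort graph of dimension n is isomorphic to the direct product S_n × D_{2n}, i.e., Aut(MB_n) ≅ Equiv.Perm (Fin n) × DihedralGroup n (where DihedralGroup n has order 2n). -/
/-!
Right translations are automorphisms of every Cayley graph of `Sₙ`, and so is left multiplication
by a permutation normalising the connection set `S` of adjacent transpositions `sᵢ = (i i+1)`; the
dihedral group, acting on the `n`-gon `Fin n`, normalises `S`. The two actions commute and give a
homomorphism `Sₙ × D₂ₙ → Aut(MBₙ)`, injective because `Sₙ` has trivial centre.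

For surjectivity, translate an automorphism so that it fixes `1`; it then permutes the neighbours
`sᵢ` of `1`. For `a ≠ b` the vertices `x` and `s_a s_b x` have a single common neighbour when `s_a`
and `s_b` do not commute (`a`, `b` adjacent on the `n`-cycle) and two when they do. Automorphisms
preserve this count, so the induced permutation of indices is an automorphism of the `n`-cycle,
realised by an element of `D₂ₙ`. After composing with it, the automorphism fixes `1` and its
neighbours; the same count shows that it fixes every vertex at distance two, and right
translations spread this along words in `S`, which generate `Sₙ`.
-/

open Equiv

/-- The Cayley graph of `Sₙ = Perm (Fin n)` with connection set `S`:
vertices `h, g` are adjacent iff `g * h⁻¹ ∈ S` (for a symmetric identity-free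
set `S`, such as a set of transpositions, `fromRel` yields exactly this relation). -/
def Cay (n : ℕ) (S : Set (Equiv.Perm (Fin n))) : SimpleGraph (Equiv.Perm (Fin n)) :=
  SimpleGraph.fromRel (fun h g => g * h⁻¹ ∈ S)

/-- The transposition graph `T(S)` of `S`: vertices `i, j ∈ Fin n` are adjacent
iff the transposition `swap i j ∈ S`. -/
def TransGraph (n : ℕ) (S : Set (Equiv.Perm (Fin n))) : SimpleGraph (Fin n) :=
  SimpleGraph.fromRel (fun i j => Equiv.swap i j ∈ S)

/-- The automorphism group of a graph, as a subgroup of the symmetric group on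
its vertex set. -/
def graphAut {V : Type*} (G : SimpleGraph V) : Subgroup (Equiv.Perm V) where
  carrier := {f | ∀ x y, G.Adj (f x) (f y) ↔ G.Adj x y}
  one_mem' := by intro x y; simp
  mul_mem' := by
    intro a b ha hb x y
    simp only [Equiv.Perm.mul_apply]
    rw [ha, hb]
  inv_mem' := by
    intro a ha x y
    rw [← ha (a⁻¹ x) (a⁻¹ y)]
    simp

/-- The image `R(Sₙ)` of the right regular representation of `Sₙ` inside `Sym(Sₙ)`:
all permutations of the form `x ↦ x * a`. -/
def Rrep (n : ℕ) : Subgroup (Equiv.Perm (Equiv.Perm (Fin n))) where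
  carrier := {f | ∃ a : Equiv.Perm (Fin n), f = Equiv.mulRight a}
  one_mem' := ⟨1, by ext x; simp⟩
  mul_mem' := by
    rintro _ _ ⟨a, rfl⟩ ⟨b, rfl⟩
    exact ⟨b * a, by ext x; simp [mul_assoc]⟩
  inv_mem' := by
    rintro _ ⟨a, rfl⟩
    exact ⟨a⁻¹, by ext x; simp⟩

/-- The image `λ(Sₙ)` of the left regular representation of `Sₙ` inside `Sym(Sₙ)`:
all permutations of the form `x ↦ b⁻¹ * x`. -/
def LrepAll (n : ℕ) : Subgroup (Equiv.Perm (Equiv.Perm (Fin n))) where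
  carrier := {f | ∃ b : Equiv.Perm (Fin n), f = Equiv.mulLeft b⁻¹}
  one_mem' := ⟨1, by ext x; simp⟩
  mul_mem' := by
    rintro _ _ ⟨a, rfl⟩ ⟨b, rfl⟩
    exact ⟨b * a, by ext x; simp [mul_assoc]⟩
  inv_mem' := by
    rintro _ ⟨a, rfl⟩
    exact ⟨a⁻¹, by ext x; simp⟩

/-- The subgroup `λ(Aut(T(S))) = { x ↦ a⁻¹ * x : a ∈ Aut(T(S)) }` of `Sym(Sₙ)`. -/
def Lrep (n : ℕ) (S : Set (Equiv.Perm (Fin n))) :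
    Subgroup (Equiv.Perm (Equiv.Perm (Fin n))) where
  carrier := {f | ∃ a ∈ graphAut (TransGraph n S), f = Equiv.mulLeft a⁻¹}
  one_mem' := ⟨1, one_mem _, by ext x; simp⟩
  mul_mem' := by
    rintro _ _ ⟨a, ha, rfl⟩ ⟨b, hb, rfl⟩
    exact ⟨b * a, mul_mem hb ha, by ext x; simp [mul_assoc]⟩
  inv_mem' := by
    rintro _ ⟨a, ha, rfl⟩
    exact ⟨a⁻¹, inv_mem ha, by ext x; simp⟩

theorem Equiv.Perm.eq_one_of_forall_commute {α : Type*} [Fintype α] [DecidableEq α]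
    (hα : 3 ≤ Fintype.card α) {z : Perm α} (hz : ∀ g, Commute z g) : z = 1 := by
  ext a
  by_contra hza
  rw [Perm.one_apply] at hza
  obtain ⟨b, hb⟩ : ({a, z a}ᶜ : Finset α).Nonempty := by
    rw [← Finset.card_pos, Finset.card_compl]
    have := Finset.card_le_two (a := a) (b := z a)
    omega
  simp only [Finset.mem_compl, Finset.mem_insert, Finset.mem_singleton, not_or] at hb
  have h := congr($((hz (swap a b)).eq) a)
  rw [Perm.mul_apply, Perm.mul_apply, swap_apply_left,
    swap_apply_of_ne_of_ne hza (Ne.symm hb.2)] at h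
  exact hb.1 (z.injective h)

section graphAut

variable {V : Type*} {G : SimpleGraph V} {φ : Perm V}

theorem image_commonNeighbors (hφ : φ ∈ graphAut G) (x y : V) :
    φ '' G.commonNeighbors x y = G.commonNeighbors (φ x) (φ y) := by
  ext z
  simp only [Set.mem_image, SimpleGraph.mem_commonNeighbors]
  constructor
  · rintro ⟨w, ⟨hx, hy⟩, rfl⟩
    exact ⟨(hφ x w).2 hx, (hφ y w).2 hy⟩
  · rintro ⟨hx, hy⟩
    refine ⟨φ.symm z, ⟨(hφ _ _).1 ?_, (hφ _ _).1 ?_⟩, φ.apply_symm_apply z⟩ <;> simpa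

theorem ncard_commonNeighbors_apply (hφ : φ ∈ graphAut G) (x y : V) :
    (G.commonNeighbors (φ x) (φ y)).ncard = (G.commonNeighbors x y).ncard := by
  rw [← image_commonNeighbors hφ, Set.ncard_image_of_injective _ φ.injective]

end graphAut

section Cayley

variable {n : ℕ} {S : Set (Perm (Fin n))}

theorem cay_adj_iff (h1 : 1 ∉ S) (hinv : ∀ s ∈ S, s⁻¹ ∈ S) {x y : Perm (Fin n)} :
    (Cay n S).Adj x y ↔ y * x⁻¹ ∈ S := by
  rw [Cay, SimpleGraph.fromRel_adj]
  constructor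
  · rintro ⟨-, h | h⟩
    · exact h
    · simpa using hinv _ h
  · intro h
    refine ⟨?_, Or.inl h⟩
    rintro rfl
    exact h1 (by simpa using h)

theorem mulLeft_mul_mulRight_mem_graphAut {p : Perm (Fin n)} (hp : ∀ w, p * w * p⁻¹ ∈ S ↔ w ∈ S)
    (q : Perm (Fin n)) : Equiv.mulLeft p * Equiv.mulRight q ∈ graphAut (Cay n S) := by
  intro x y
  have hconj : ∀ u v : Perm (Fin n), p * (v * q) * (p * (u * q))⁻¹ = p * (v * u⁻¹) * p⁻¹ := by
    intro u v
    group
  simp only [Cay, SimpleGraph.fromRel_adj, Perm.mul_apply, coe_mulLeft, coe_mulRight, hconj, hp,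
    Ne, mul_left_cancel_iff, mul_right_cancel_iff]

theorem mulRight_mem_graphAut (q : Perm (Fin n)) : Equiv.mulRight q ∈ graphAut (Cay n S) := by
  simpa using mulLeft_mul_mulRight_mem_graphAut (p := 1) (S := S) (by simp) q

/-- Conjugating by the right translation by `g` moves the local hypothesis from `1` to `g`. -/
theorem eq_one_of_fix_one_of_fix_mem (hS : Submonoid.closure S = ⊤)
    (hloc : ∀ ψ ∈ graphAut (Cay n S), ψ 1 = 1 → (∀ s ∈ S, ψ s = s) →
      ∀ s ∈ S, ∀ t ∈ S, ψ (t * s) = t * s)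
    {φ : Perm (Perm (Fin n))} (hφ : φ ∈ graphAut (Cay n S)) (h1 : φ 1 = 1)
    (hfix : ∀ s ∈ S, φ s = s) : φ = 1 := by
  suffices h : ∀ g, φ g = g ∧ ∀ s ∈ S, φ (s * g) = s * g from Equiv.ext fun g => (h g).1
  intro g
  induction (hS ▸ Submonoid.mem_top g : g ∈ Submonoid.closure S)
    using Submonoid.closure_induction_left with
  | one => exact ⟨h1, fun s hs => by simpa using hfix s hs⟩
  | mul_left s hs g _ ih =>
    refine ⟨ih.2 s hs, fun t ht => ?_⟩
    have hψ : Equiv.mulRight g⁻¹ * φ * Equiv.mulRight g ∈ graphAut (Cay n S) :=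
      mul_mem (mul_mem (mulRight_mem_graphAut _) hφ) (mulRight_mem_graphAut _)
    have := hloc _ hψ (by simp [ih.1]) (fun s' hs' => by simp [ih.2 s' hs']) s hs t ht
    simpa [mul_assoc, mul_inv_eq_iff_eq_mul] using this

end Cayley

namespace ModifiedBubbleSort

open scoped Fin.CommRing

variable {n : ℕ} [NeZero n]

theorem ofNat_ne_zero_of_lt (k : ℕ) (hk0 : k ≠ 0) (hk : k < n) : Fin.ofNat n k ≠ 0 := by
  rwa [Ne, Fin.ext_iff, Fin.val_ofNat, Fin.val_zero, Nat.mod_eq_of_lt hk]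

def adjSwap (i : Fin n) : Perm (Fin n) := swap i (i + 1)

@[simp]
theorem adjSwap_mul_self (i : Fin n) : adjSwap i * adjSwap i = 1 := swap_mul_self _ _

@[simp]
theorem adjSwap_mul_adjSwap_mul (i : Fin n) (x : Perm (Fin n)) :
    adjSwap i * (adjSwap i * x) = x := by
  rw [← mul_assoc, adjSwap_mul_self, one_mul]

@[simp]
theorem adjSwap_inv (i : Fin n) : (adjSwap i)⁻¹ = adjSwap i := swap_inv _ _

theorem adjSwap_ne_one (hn : 2 ≤ n) (i : Fin n) : adjSwap i ≠ 1 := by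
  have h₁ : (1 : Fin n) ≠ 0 := ofNat_ne_zero_of_lt 1 one_ne_zero hn
  rw [adjSwap, Ne, swap_eq_one_iff]
  exact fun h => h₁ (by linear_combination -h)

theorem adjSwap_injective (hn : 3 ≤ n) : Function.Injective (adjSwap (n := n)) := by
  intro i j h
  have h₁ : (1 : Fin n) ≠ 0 := ofNat_ne_zero_of_lt 1 one_ne_zero (by omega)
  have h₂ : (2 : Fin n) ≠ 0 := ofNat_ne_zero_of_lt 2 two_ne_zero hn
  have hi := congr($h i)
  rw [adjSwap, adjSwap, swap_apply_left, swap_apply_def] at hi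
  split_ifs at hi with hij hij'
  · exact hij
  · exact absurd (by linear_combination hi - hij') h₂
  · exact absurd (by linear_combination hi) h₁

theorem commute_adjSwap_iff (hn : 3 ≤ n) {a b : Fin n} :
    Commute (adjSwap a) (adjSwap b) ↔ a = b ∨ (a ≠ b + 1 ∧ b ≠ a + 1) := by
  have : (1 : Fin n) ≠ 0 := ofNat_ne_zero_of_lt 1 one_ne_zero (by omega)
  have : (2 : Fin n) ≠ 0 := ofNat_ne_zero_of_lt 2 two_ne_zero hn
  constructor
  · intro h
    have ha := congr($h.eq a)
    have hb := congr($h.eq b)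
    simp only [adjSwap, Perm.mul_apply, swap_apply_def] at ha hb
    grind
  · rintro (rfl | ⟨h₁, h₂⟩)
    · exact Commute.refl _
    · refine Equiv.ext fun x => ?_
      simp only [adjSwap, Perm.mul_apply, swap_apply_def]
      grind

/-- Both sides are determined by their values at the at most eight points moved by the factors. -/
theorem adjSwap_mul_adjSwap_eq_iff (hn : 4 ≤ n) {a b c d : Fin n} (hab : a ≠ b) :
    adjSwap a * adjSwap b = adjSwap c * adjSwap d ↔
      (c = a ∧ d = b) ∨ (c = b ∧ d = a ∧ Commute (adjSwap a) (adjSwap b)) := by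
  constructor
  · intro e
    suffices (c = a ∧ d = b) ∨ (c = b ∧ d = a) by
      rcases this with ⟨rfl, rfl⟩ | ⟨rfl, rfl⟩
      · exact Or.inl ⟨rfl, rfl⟩
      · exact Or.inr ⟨rfl, rfl, e⟩
    have : (2 : Fin n) ≠ 0 := ofNat_ne_zero_of_lt 2 two_ne_zero (by omega)
    have : (3 : Fin n) ≠ 0 := ofNat_ne_zero_of_lt 3 three_ne_zero hn
    have e₁ := congr($e a)
    have e₂ := congr($e (a + 1))
    have e₃ := congr($e b)
    have e₄ := congr($e (b + 1))
    have e₅ := congr($e c)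
    have e₆ := congr($e (c + 1))
    have e₇ := congr($e d)
    have e₈ := congr($e (d + 1))
    simp only [adjSwap, Perm.mul_apply, swap_apply_def] at e₁ e₂ e₃ e₄ e₅ e₆ e₇ e₈
    grind (splits := 100)
  · rintro (⟨rfl, rfl⟩ | ⟨rfl, rfl, h⟩)
    · rfl
    · exact h.eq

/-- The two cycle-neighbours `a ≠ u` of `b` are told apart by `c = a + (a - b)`, the other
neighbour of `a`. -/
theorem exists_adjSwap_separating (hn : 5 ≤ n) {a b u : Fin n} (hua : u ≠ a)
    (ha : ¬Commute (adjSwap a) (adjSwap b)) (hu : ¬Commute (adjSwap u) (adjSwap b)) :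
    ∃ c, Commute (adjSwap c) (adjSwap b) ∧ ¬Commute (adjSwap a) (adjSwap c) ∧
      u ≠ c ∧ Commute (adjSwap u) (adjSwap c) := by
  have h₁ : (1 : Fin n) ≠ 0 := ofNat_ne_zero_of_lt 1 one_ne_zero (by omega)
  have h₂ : (2 : Fin n) ≠ 0 := ofNat_ne_zero_of_lt 2 two_ne_zero (by omega)
  have h₃ : (3 : Fin n) ≠ 0 := ofNat_ne_zero_of_lt 3 three_ne_zero (by omega)
  have h₄ : (4 : Fin n) ≠ 0 := ofNat_ne_zero_of_lt 4 four_ne_zero (by omega)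
  simp only [commute_adjSwap_iff (by omega : 3 ≤ n)] at ha hu ⊢
  refine ⟨a + (a - b), ?_, ?_, ?_, ?_⟩ <;> grind

theorem closure_range_adjSwap : Submonoid.closure (Set.range (adjSwap (n := n))) = ⊤ := by
  obtain ⟨m, rfl⟩ := Nat.exists_eq_add_one_of_ne_zero (NeZero.ne n)
  rw [eq_top_iff, ← Perm.mclosure_swap_castSucc_succ m]
  refine Submonoid.closure_mono ?_
  rintro _ ⟨i, rfl⟩
  exact ⟨i.castSucc, by rw [adjSwap, Fin.coeSucc_eq_succ]⟩

variable (n) in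
abbrev graph : SimpleGraph (Perm (Fin n)) := Cay n (Set.range adjSwap)

theorem graph_adj_iff (hn : 2 ≤ n) {x y : Perm (Fin n)} :
    (graph n).Adj x y ↔ ∃ i, y = adjSwap i * x := by
  rw [graph, cay_adj_iff (by rintro ⟨i, hi⟩; exact adjSwap_ne_one hn i hi)
    (by rintro _ ⟨i, rfl⟩; exact ⟨i, adjSwap_inv i⟩)]
  simp only [Set.mem_range, eq_comm (a := adjSwap _), mul_inv_eq_iff_eq_mul]

theorem graph_adj_adjSwap_mul (hn : 2 ≤ n) (i : Fin n) (x : Perm (Fin n)) :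
    (graph n).Adj x (adjSwap i * x) :=
  (graph_adj_iff hn).2 ⟨i, rfl⟩

theorem mem_commonNeighbors_adjSwap_mul_iff (hn : 4 ≤ n) {a b : Fin n} (hab : a ≠ b)
    (x z : Perm (Fin n)) :
    z ∈ (graph n).commonNeighbors x (adjSwap a * adjSwap b * x) ↔
      z = adjSwap b * x ∨ (z = adjSwap a * x ∧ Commute (adjSwap a) (adjSwap b)) := by
  rw [SimpleGraph.mem_commonNeighbors, graph_adj_iff (by omega), graph_adj_iff (by omega)]
  constructor
  · rintro ⟨⟨v, rfl⟩, u, hu⟩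
    have : adjSwap a * adjSwap b = adjSwap u * adjSwap v := by
      simpa [← mul_assoc] using congr(adjSwap u * $hu).symm
    rcases (adjSwap_mul_adjSwap_eq_iff hn hab).1 this with ⟨rfl, rfl⟩ | ⟨rfl, rfl, hc⟩
    · exact Or.inl rfl
    · exact Or.inr ⟨rfl, hc⟩
  · rintro (rfl | ⟨rfl, hc⟩)
    · exact ⟨⟨b, rfl⟩, a, by simp [← mul_assoc]⟩
    · exact ⟨⟨a, rfl⟩, b, by rw [hc.eq]; simp [← mul_assoc]⟩

theorem ncard_commonNeighbors_adjSwap_mul_eq_one_iff (hn : 4 ≤ n) {a b : Fin n} (hab : a ≠ b)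
    (x : Perm (Fin n)) :
    ((graph n).commonNeighbors x (adjSwap a * adjSwap b * x)).ncard = 1 ↔
      ¬Commute (adjSwap a) (adjSwap b) := by
  by_cases hc : Commute (adjSwap a) (adjSwap b)
  · have hne : adjSwap b * x ≠ adjSwap a * x :=
      fun h => hab ((adjSwap_injective (by omega)) (mul_right_cancel h)).symm
    have : (graph n).commonNeighbors x (adjSwap a * adjSwap b * x) =
        {adjSwap b * x, adjSwap a * x} := by
      ext z
      simp [mem_commonNeighbors_adjSwap_mul_iff hn hab, hc]
    simp [this, Set.ncard_pair hne, hc]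
  · have : (graph n).commonNeighbors x (adjSwap a * adjSwap b * x) = {adjSwap b * x} := by
      ext z
      simp [mem_commonNeighbors_adjSwap_mul_iff hn hab, hc]
    simp [this, hc]

section Rigidity

variable {ψ : Perm (Perm (Fin n))}

theorem exists_apply_adjSwap_mul_adjSwap (hn : 3 ≤ n) (hψ : ψ ∈ graphAut (graph n))
    (h1 : ψ 1 = 1) (hfix : ∀ i, ψ (adjSwap i) = adjSwap i) {a b : Fin n} (hab : a ≠ b) :
    ∃ u ≠ b, ψ (adjSwap a * adjSwap b) = adjSwap u * adjSwap b := by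
  have hadj := (hψ _ _).2 (graph_adj_adjSwap_mul (by omega) a (adjSwap b))
  rw [hfix b, graph_adj_iff (by omega)] at hadj
  obtain ⟨u, hu⟩ := hadj
  refine ⟨u, ?_, hu⟩
  rintro rfl
  rw [adjSwap_mul_self, ← h1] at hu
  exact hab (adjSwap_injective hn (by simpa [mul_eq_one_iff_eq_inv] using ψ.injective hu))

theorem apply_adjSwap_mul_adjSwap_of_commute (hn : 4 ≤ n) (hψ : ψ ∈ graphAut (graph n))
    (h1 : ψ 1 = 1) (hfix : ∀ i, ψ (adjSwap i) = adjSwap i) {a b : Fin n}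
    (hc : Commute (adjSwap a) (adjSwap b)) :
    ψ (adjSwap a * adjSwap b) = adjSwap a * adjSwap b := by
  obtain rfl | hab := eq_or_ne a b
  · rw [adjSwap_mul_self, h1]
  obtain ⟨u, hub, hu⟩ := exists_apply_adjSwap_mul_adjSwap (by omega) hψ h1 hfix hab
  have h := Set.mem_image_of_mem ψ
    ((mem_commonNeighbors_adjSwap_mul_iff hn hab 1 (adjSwap a)).2 (Or.inr ⟨by simp, hc⟩))
  rw [image_commonNeighbors hψ, hfix a, h1, mul_one, hu, ← mul_one (adjSwap u * adjSwap b),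
    mem_commonNeighbors_adjSwap_mul_iff hn hub, mul_one, mul_one] at h
  rcases h with h | ⟨h, -⟩
  · exact absurd (adjSwap_injective (by omega) h) hab
  · rw [hu, adjSwap_injective (by omega) h]

theorem apply_adjSwap_mul_adjSwap (hn : 5 ≤ n) (hψ : ψ ∈ graphAut (graph n))
    (h1 : ψ 1 = 1) (hfix : ∀ i, ψ (adjSwap i) = adjSwap i) (a b : Fin n) :
    ψ (adjSwap a * adjSwap b) = adjSwap a * adjSwap b := by
  by_cases hc : Commute (adjSwap a) (adjSwap b)
  · exact apply_adjSwap_mul_adjSwap_of_commute (by omega) hψ h1 hfix hc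
  have hab : a ≠ b := by rintro rfl; exact hc (Commute.refl _)
  obtain ⟨u, hub, hu⟩ := exists_apply_adjSwap_mul_adjSwap (by omega) hψ h1 hfix hab
  have hcu : ¬Commute (adjSwap u) (adjSwap b) := by
    rwa [← ncard_commonNeighbors_adjSwap_mul_eq_one_iff (by omega) hub 1, mul_one, ← hu, ← h1,
      ncard_commonNeighbors_apply hψ, ← mul_one (adjSwap a * adjSwap b),
      ncard_commonNeighbors_adjSwap_mul_eq_one_iff (by omega) hab]
  suffices hua : u = a by rw [hu, hua]
  by_contra hua
  obtain ⟨c, hcb, hac, huc, hcomm⟩ := exists_adjSwap_separating hn hua hc hcu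
  have hac' : a ≠ c := by rintro rfl; exact hac (Commute.refl _)
  -- `s_c s_b` is fixed, and only one of `s_a s_b`, `ψ (s_a s_b) = s_u s_b` has a single common
  -- neighbour with it
  have h := ncard_commonNeighbors_apply hψ (adjSwap c * adjSwap b) (adjSwap a * adjSwap b)
  have hy : ∀ v, adjSwap v * adjSwap b = adjSwap v * adjSwap c * (adjSwap c * adjSwap b) := by
    simp [mul_assoc]
  rw [apply_adjSwap_mul_adjSwap_of_commute (by omega) hψ h1 hfix hcb, hu, hy u, hy a] at h
  exact (ncard_commonNeighbors_adjSwap_mul_eq_one_iff (by omega) huc _).1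
    (h.trans ((ncard_commonNeighbors_adjSwap_mul_eq_one_iff (by omega) hac' _).2 hac)) hcomm

theorem eq_one_of_fix_one_of_fix_adjSwap (hn : 5 ≤ n) (hψ : ψ ∈ graphAut (graph n))
    (h1 : ψ 1 = 1) (hfix : ∀ i, ψ (adjSwap i) = adjSwap i) : ψ = 1 := by
  refine eq_one_of_fix_one_of_fix_mem closure_range_adjSwap ?_ hψ h1
    (by rintro _ ⟨i, rfl⟩; exact hfix i)
  rintro ψ hψ h1 hfix _ ⟨b, rfl⟩ _ ⟨a, rfl⟩
  exact apply_adjSwap_mul_adjSwap hn hψ h1 (fun i => hfix _ ⟨i, rfl⟩) a b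

/-- Adjacent transpositions do not commute, and `ψ` preserves numbers of common neighbours. -/
theorem eq_add_one_or_eq_add_one_of_apply_adjSwap (hn : 4 ≤ n) (hψ : ψ ∈ graphAut (graph n))
    {f : Fin n → Fin n} (hf : ∀ i, ψ (adjSwap i) = adjSwap (f i)) (hf_inj : Function.Injective f)
    (i : Fin n) :
    f (i + 1) = f i + 1 ∨ f i = f (i + 1) + 1 := by
  have h₁ : (1 : Fin n) ≠ 0 := ofNat_ne_zero_of_lt 1 one_ne_zero (by omega)
  have hne : i + 1 ≠ i := fun h => h₁ (by linear_combination h)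
  have hnc : ¬Commute (adjSwap (i + 1)) (adjSwap i) := by
    rw [commute_adjSwap_iff (by omega)]
    grind
  have e : ∀ j k : Fin n, adjSwap j = adjSwap j * adjSwap k * adjSwap k := by simp [mul_assoc]
  have h := ncard_commonNeighbors_apply hψ (adjSwap i) (adjSwap (i + 1))
  rw [hf, hf, e (f (i + 1)) (f i), e (i + 1) i] at h
  have := (ncard_commonNeighbors_adjSwap_mul_eq_one_iff hn (hf_inj.ne hne) _).1
    (h.trans ((ncard_commonNeighbors_adjSwap_mul_eq_one_iff hn hne _).2 hnc))
  rw [commute_adjSwap_iff (by omega)] at this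
  grind

end Rigidity

theorem induction_add_one {P : Fin n → Prop} (h0 : P 0) (hs : ∀ i, P i → P (i + 1)) (i : Fin n) :
    P i := by
  have key : ∀ k : ℕ, P k := by
    intro k
    induction k with
    | zero => simpa using h0
    | succ k ih => simpa using hs _ ih
  simpa using key i

theorem forall_eq_add_or_forall_eq_sub (hn : 3 ≤ n) {f : Fin n → Fin n}
    (hf : Function.Injective f) (hstep : ∀ i, f (i + 1) = f i + 1 ∨ f i = f (i + 1) + 1) :
    (∀ i, f i = f 0 + i) ∨ (∀ i, f i = f 0 - i) := by
  have h₂ : (2 : Fin n) ≠ 0 := ofNat_ne_zero_of_lt 2 two_ne_zero hn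
  -- a change of direction would give `f (i + 2) = f i`
  have hprop : ∀ e : Fin n, (e = 1 ∨ e = -1) → f 1 = f 0 + e → ∀ i, f (i + 1) = f i + e := by
    intro e he h0
    refine induction_add_one (by simpa using h0) fun i hi => ?_
    have := @hf (i + 1 + 1) i
    have := hstep (i + 1)
    grind
  have hlin : ∀ e : Fin n, (∀ i, f (i + 1) = f i + e) → ∀ i, f i = f 0 + e * i := by
    intro e he
    refine induction_add_one (by simp) fun i hi => ?_
    rw [he, hi]
    ring
  rcases hstep 0 with h | h
  · left
    intro i
    simpa using hlin 1 (hprop 1 (Or.inl rfl) (by simpa using h)) i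
  · right
    intro i
    have := hlin (-1) (hprop (-1) (Or.inr rfl) (by simp at h ⊢; linear_combination -h)) i
    linear_combination this

open DihedralGroup

/-- The signs are dictated by Mathlib's convention `r i * sr j = sr (j - i)`. -/
def dihedralPerm : DihedralGroup n →* Perm (Fin n) where
  toFun
    | r i => Equiv.subRight ((ZMod.finEquiv n).symm i)
    | sr i => Equiv.subLeft ((ZMod.finEquiv n).symm i)
  map_one' := by rw [DihedralGroup.one_def]; ext x; simp
  map_mul' := by
    rintro (i | i) (j | j) <;> ext x <;> simp <;> abel_nf

@[simp]
theorem dihedralPerm_r_apply (i : ZMod n) (x : Fin n) :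
    dihedralPerm (r i) x = x - (ZMod.finEquiv n).symm i := rfl

@[simp]
theorem dihedralPerm_sr_apply (i : ZMod n) (x : Fin n) :
    dihedralPerm (sr i) x = (ZMod.finEquiv n).symm i - x := rfl

theorem exists_dihedralPerm_conj_adjSwap (d : DihedralGroup n) (i : Fin n) :
    ∃ j, dihedralPerm d * adjSwap i * (dihedralPerm d)⁻¹ = adjSwap j := by
  rw [adjSwap, ← swap_apply_apply]
  rcases d with k | k
  · exact ⟨i - (ZMod.finEquiv n).symm k, by simp [adjSwap, sub_add_eq_add_sub]⟩
  · refine ⟨(ZMod.finEquiv n).symm k - (i + 1), ?_⟩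
    rw [adjSwap, swap_comm, sub_add_eq_add_sub, add_sub_add_right_eq_sub]
    rfl

theorem dihedralPerm_conj_mem_range_iff (d : DihedralGroup n) (w : Perm (Fin n)) :
    dihedralPerm d * w * (dihedralPerm d)⁻¹ ∈ Set.range adjSwap ↔ w ∈ Set.range adjSwap := by
  constructor
  · rintro ⟨j, hj⟩
    obtain ⟨i, hi⟩ := exists_dihedralPerm_conj_adjSwap d⁻¹ j
    exact ⟨i, by rw [← hi, hj, map_inv]; group⟩
  · rintro ⟨i, rfl⟩
    obtain ⟨j, hj⟩ := exists_dihedralPerm_conj_adjSwap d i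
    exact ⟨j, hj.symm⟩

theorem dihedralPerm_injective (hn : 3 ≤ n) : Function.Injective (dihedralPerm (n := n)) := by
  rw [injective_iff_map_eq_one]
  rintro (k | k) h
  · have h0 := congr($h 0)
    simp at h0
    rw [DihedralGroup.one_def, h0]
  · have h0 := congr($h 0)
    have h1 := congr($h 1)
    simp only [dihedralPerm_sr_apply, Perm.one_apply, sub_zero, EmbeddingLike.map_eq_zero_iff]
      at h0 h1
    rw [h0, map_zero, zero_sub] at h1
    have h₂ : (2 : Fin n) ≠ 0 := ofNat_ne_zero_of_lt 2 two_ne_zero hn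
    exact (h₂ (by linear_combination -h1)).elim

theorem exists_dihedralPerm_conj_eq (hn : 3 ≤ n) {f : Fin n → Fin n}
    (hf : Function.Injective f) (hstep : ∀ i, f (i + 1) = f i + 1 ∨ f i = f (i + 1) + 1) :
    ∃ d, ∀ i, dihedralPerm d * adjSwap i * (dihedralPerm d)⁻¹ = adjSwap (f i) := by
  rcases forall_eq_add_or_forall_eq_sub hn hf hstep with h | h
  · refine ⟨r (ZMod.finEquiv n (-f 0)), fun i => ?_⟩
    rw [adjSwap, ← swap_apply_apply, adjSwap, h i]
    simp only [dihedralPerm_r_apply, map_neg, RingEquiv.symm_apply_apply, sub_neg_eq_add]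
    congr 1 <;> ring
  · refine ⟨sr (ZMod.finEquiv n (f 0 + 1)), fun i => ?_⟩
    rw [adjSwap, ← swap_apply_apply, swap_comm, adjSwap, h i]
    simp only [dihedralPerm_sr_apply, RingEquiv.symm_apply_apply, add_sub_add_right_eq_sub,
      sub_add_eq_add_sub]

def toAut : Perm (Fin n) × DihedralGroup n →* graphAut (graph n) where
  toFun p := ⟨Equiv.mulLeft (dihedralPerm p.2) * Equiv.mulRight p.1⁻¹,
    mulLeft_mul_mulRight_mem_graphAut (dihedralPerm_conj_mem_range_iff p.2) _⟩
  map_one' := by ext; simp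
  map_mul' p q := by ext; simp [mul_assoc]

@[simp]
theorem toAut_apply (p : Perm (Fin n) × DihedralGroup n) (x : Perm (Fin n)) :
    (toAut p : Perm (Perm (Fin n))) x = dihedralPerm p.2 * x * p.1⁻¹ := by
  simp [toAut, mul_assoc]

theorem toAut_injective (hn : 3 ≤ n) : Function.Injective (toAut (n := n)) := by
  rw [injective_iff_map_eq_one]
  rintro ⟨a, d⟩ h
  have hx : ∀ x, dihedralPerm d * x * a⁻¹ = x := fun x => by simpa using congr(Subtype.val $h x)
  have ha : a = dihedralPerm d := (mul_inv_eq_one.1 (by simpa using hx 1)).symm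
  have hd : dihedralPerm d = 1 := by
    refine Perm.eq_one_of_forall_commute (by simpa) fun g => ?_
    have := hx g
    rw [ha] at this
    exact mul_inv_eq_iff_eq_mul.1 this
  rw [← map_one dihedralPerm] at hd
  simp [ha, dihedralPerm_injective hn hd]

theorem exists_eq_dihedralPerm_conj (hn : 5 ≤ n) {φ : Perm (Perm (Fin n))}
    (hφ : φ ∈ graphAut (graph n)) (h1 : φ 1 = 1) :
    ∃ d, ∀ x, φ x = dihedralPerm d * x * (dihedralPerm d)⁻¹ := by
  have hS : ∀ i, ∃ j, φ (adjSwap i) = adjSwap j := fun i => by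
    have := (hφ 1 (adjSwap i)).2 (by simpa using graph_adj_adjSwap_mul (by omega) i 1)
    rw [h1, graph_adj_iff (by omega)] at this
    simpa [eq_comm] using this
  choose f hf using hS
  have hf_inj : Function.Injective f := fun i j h =>
    adjSwap_injective (by omega) (φ.injective (by rw [hf, hf, h]))
  obtain ⟨d, hd⟩ := exists_dihedralPerm_conj_eq (by omega) hf_inj
    (eq_add_one_or_eq_add_one_of_apply_adjSwap (by omega) hφ hf hf_inj)
  have hψ : (toAut ((dihedralPerm d)⁻¹, d⁻¹) : Perm (Perm (Fin n))) * φ ∈ graphAut (graph n) :=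
    mul_mem (toAut _).2 hφ
  have hψ1 := eq_one_of_fix_one_of_fix_adjSwap hn hψ (by simp [h1])
    fun i => by simp [hf, ← hd, mul_assoc]
  refine ⟨d, fun x => ?_⟩
  have := congr($hψ1 x)
  simp only [Perm.coe_mul, Function.comp_apply, toAut_apply, map_inv, inv_inv, Perm.one_apply]
    at this
  conv_rhs => rw [← this]
  group

theorem toAut_surjective (hn : 5 ≤ n) : Function.Surjective (toAut (n := n)) := by
  rintro ⟨φ, hφ⟩
  have hψ : Equiv.mulRight (φ 1)⁻¹ * φ ∈ graphAut (graph n) :=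
    mul_mem (mulRight_mem_graphAut _) hφ
  obtain ⟨d, hd⟩ := exists_eq_dihedralPerm_conj hn hψ (by simp)
  refine ⟨((φ 1)⁻¹ * dihedralPerm d, d), Subtype.ext (Equiv.ext fun x => ?_)⟩
  have := hd x
  simp only [Perm.coe_mul, Function.comp_apply, coe_mulRight] at this
  simp only [toAut_apply, mul_inv_rev, inv_inv]
  rw [← mul_assoc, ← this, inv_mul_cancel_right]

end ModifiedBubbleSort

/-- For all `n ≥ 5`, the automorphism group of the modified
bubble-sort graph of dimension `n` (the Cayley graph of `Sₙ` generated by the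
`n` cyclically adjacent transpositions `swap i (i+1 mod n)`) is isomorphic to
the direct product `Sₙ × D₂ₙ`. -/
theorem aut_modifiedBubbleSort_eq_prod_dihedral (n : ℕ) (hn : 5 ≤ n) :
    Nonempty
      ((graphAut (Cay n
          {s : Equiv.Perm (Fin n) | ∃ i : Fin n, s = Equiv.swap i (i + ⟨1, by omega⟩)})) ≃*
        Equiv.Perm (Fin n) × DihedralGroup n) := by
  have : NeZero n := ⟨by omega⟩
  have hS : {s : Perm (Fin n) | ∃ i : Fin n, s = swap i (i + ⟨1, by omega⟩)} =
      Set.range ModifiedBubbleSort.adjSwap := by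
    have h1 : (⟨1, by omega⟩ : Fin n) = 1 :=
      Fin.ext (by rw [Fin.val_one', Nat.mod_eq_of_lt (by omega)])
    ext s
    simp [h1, ModifiedBubbleSort.adjSwap, eq_comm]
  rw [hS]
  exact ⟨(MulEquiv.ofBijective ModifiedBubbleSort.toAut
    ⟨ModifiedBubbleSort.toAut_injective (by omega), ModifiedBubbleSort.toAut_surjective hn⟩).symm⟩
end

section
/- Let S be a set of transpositions generating S_n, let T(S) be the transposition graph of S, and let a be a permutation of Fin n that is a graph automorphism of T(S). Then the map λ_a : S_n → S_n, x ↦ a⁻¹ * x, is a graph automorphism of the Cayley graph Cay(S_n, S). -/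
open Equiv

/-- Let `S` be a set of transpositions generating `Sₙ` and let `a`
be a graph automorphism of the transposition graph `T(S)`. Then the map
`λ_a : x ↦ a⁻¹ * x` is a graph automorphism of the Cayley graph `Cay(Sₙ, S)`. -/
theorem mulLeft_inv_mem_aut_cayley (n : ℕ) (S : Set (Equiv.Perm (Fin n)))
    (hS : ∀ s ∈ S, Equiv.Perm.IsSwap s)
    (hgen : Subgroup.closure S = ⊤)
    (a : Equiv.Perm (Fin n)) (ha : a ∈ graphAut (TransGraph n S)) :
    Equiv.mulLeft a⁻¹ ∈ graphAut (Cay n S) := by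
  -- key: membership in S is invariant under conjugation by a⁻¹
  have key : ∀ g : Equiv.Perm (Fin n), g ∈ S ↔ a⁻¹ * g * a ∈ S := by
    have adjS : ∀ i j : Fin n, i ≠ j → ((TransGraph n S).Adj i j ↔ Equiv.swap i j ∈ S) := by
      intro i j hij
      constructor
      · rintro ⟨-, h | h⟩
        · exact h
        · rwa [Equiv.swap_comm]
      · exact fun h => ⟨hij, Or.inl h⟩
    have hadj : ∀ i j : Fin n, i ≠ j →
        (Equiv.swap i j ∈ S ↔ Equiv.swap (a⁻¹ i) (a⁻¹ j) ∈ S) := by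
      intro i j hij
      have hij' : a⁻¹ i ≠ a⁻¹ j := fun h => hij (a⁻¹.injective h)
      rw [← adjS i j hij, ← adjS _ _ hij']
      have := ha (a⁻¹ i) (a⁻¹ j)
      simpa using this
    intro g
    constructor
    · intro hg
      obtain ⟨i, j, hij, rfl⟩ := hS g hg
      have : a⁻¹ * Equiv.swap i j * a = Equiv.swap (a⁻¹ i) (a⁻¹ j) := by
        rw [Equiv.swap_apply_apply]; group
      rw [this]; exact (hadj i j hij).mp hg
    · intro hg
      obtain ⟨i, j, hij, hswap⟩ := hS _ hg
      have hg' : g = a * Equiv.swap i j * a⁻¹ := by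
        rw [← hswap]; group
      have : a * Equiv.swap i j * a⁻¹ = Equiv.swap (a i) (a j) := by
        rw [Equiv.swap_apply_apply]
      rw [hg', this]
      have hij' : a i ≠ a j := fun h => hij (a.injective h)
      refine (hadj (a i) (a j) hij').mpr ?_
      simpa [← hswap] using hg
  intro x y
  simp only [Cay, SimpleGraph.fromRel_adj, Equiv.coe_mulLeft]
  have hne : a⁻¹ * x ≠ a⁻¹ * y ↔ x ≠ y := by
    constructor
    · intro h hxy; exact h (by rw [hxy])
    · intro h hxy; exact h (mul_left_cancel hxy)
  have h1 : a⁻¹ * y * (a⁻¹ * x)⁻¹ = a⁻¹ * (y * x⁻¹) * a := by group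
  have h2 : a⁻¹ * x * (a⁻¹ * y)⁻¹ = a⁻¹ * (x * y⁻¹) * a := by group
  rw [h1, h2, ← key, ← key, hne]
end

section
/- Let S be a set of transpositions generating S_n and let T(S) be its transposition graph. The set { λ_a : a ∈ Aut(T(S)) }, where λ_a : x ↦ a⁻¹ * x, is a subgroup of the automorphism group of the Cayley graph Cay(S_n, S), and this subgroup is isomorphic (as a group) to Aut(T(S)). -/
open Equiv

lemma swap_mem_iff_adj (n : ℕ) (S : Set (Equiv.Perm (Fin n)))
    (hS : ∀ s ∈ S, Equiv.Perm.IsSwap s) {i j : Fin n} :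
    Equiv.swap i j ∈ S ↔ (TransGraph n S).Adj i j := by
  constructor
  · intro h
    have hne : i ≠ j := by
      rintro rfl
      obtain ⟨x, y, hxy, hxy2⟩ := hS _ h
      rw [Equiv.swap_self] at hxy2
      exact hxy (Equiv.swap_eq_one_iff.mp hxy2.symm)
    exact ⟨hne, Or.inl h⟩
  · rintro ⟨hne, h | h⟩
    · exact h
    · rwa [Equiv.swap_comm]

lemma conj_mem (n : ℕ) (S : Set (Equiv.Perm (Fin n)))
    (hS : ∀ s ∈ S, Equiv.Perm.IsSwap s) {a : Equiv.Perm (Fin n)}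
    (ha : a ∈ graphAut (TransGraph n S)) {s : Equiv.Perm (Fin n)} (hs : s ∈ S) :
    a * s * a⁻¹ ∈ S := by
  obtain ⟨i, j, hij, rfl⟩ := hS s hs
  rw [← Equiv.swap_apply_apply, swap_mem_iff_adj n S hS, ha]
  exact (swap_mem_iff_adj n S hS).mp hs

/-- Let `S` be a set of transpositions generating `Sₙ`. The set
`{ λ_a : a ∈ Aut(T(S)) }` (with `λ_a : x ↦ a⁻¹ * x`), which forms the subgroup
`Lrep n S` of `Sym(Sₙ)`, is contained in the automorphism group of the Cayley
graph `Cay(Sₙ, S)`, and it is isomorphic as a group to `Aut(T(S))`. -/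
theorem lrep_le_aut_cayley_and_iso (n : ℕ) (S : Set (Equiv.Perm (Fin n)))
    (hS : ∀ s ∈ S, Equiv.Perm.IsSwap s)
    (hgen : Subgroup.closure S = ⊤) :
    Lrep n S ≤ graphAut (Cay n S) ∧
      Nonempty ((Lrep n S) ≃* (graphAut (TransGraph n S))) := by
  have key : ∀ a ∈ graphAut (TransGraph n S), ∀ s ∈ S, a * s * a⁻¹ ∈ S :=
    fun a ha s hs => conj_mem n S hS ha hs
  constructor
  · rintro _ ⟨a, ha, rfl⟩ x y
    show (Cay n S).Adj (a⁻¹ * x) (a⁻¹ * y) ↔ (Cay n S).Adj x y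
    simp only [Cay, SimpleGraph.fromRel_adj]
    have h1 : (a⁻¹ * x ≠ a⁻¹ * y) ↔ (x ≠ y) := by simp
    have h2 : ∀ u v : Equiv.Perm (Fin n),
        a⁻¹ * v * (a⁻¹ * u)⁻¹ = a⁻¹ * (v * u⁻¹) * a := by
      intro u v; group
    rw [h1, h2, h2]
    have h3 : ∀ w : Equiv.Perm (Fin n), (a⁻¹ * w * a ∈ S ↔ w ∈ S) := by
      intro w
      constructor
      · intro h
        have := key a ha _ h
        simpa [mul_assoc] using this
      · intro h
        have := key a⁻¹ (inv_mem ha) _ h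
        simpa using this
    rw [h3, h3]
  · let φ : (graphAut (TransGraph n S)) →* (Lrep n S) :=
      { toFun := fun a => ⟨Equiv.mulLeft (a : Equiv.Perm (Fin n)),
          ⟨a⁻¹, inv_mem a.2, by simp⟩⟩
        map_one' := by ext x; simp
        map_mul' := by intro a b; ext x; simp [mul_assoc] }
    have hbij : Function.Bijective φ := by
      constructor
      · intro a b hab
        have hab' : (φ a : Equiv.Perm (Equiv.Perm (Fin n))) = φ b :=
          congrArg Subtype.val hab
        have := congrArg (fun f : Equiv.Perm (Equiv.Perm (Fin n)) => f 1) hab'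
        exact Subtype.ext (by simpa [φ] using this)
      · rintro ⟨_, a, ha, rfl⟩
        exact ⟨⟨a⁻¹, inv_mem ha⟩, by simp [φ]⟩
    exact ⟨(MulEquiv.ofBijective φ hbij).symm⟩
end

section
/- Let n ≥ 3 and let S be a set of transpositions generating S_n such that the Cayley graph Cay(S_n, S) is normal. Then every graph automorphism g of Cay(S_n, S) can be written uniquely in the form g : x ↦ b⁻¹ * x * a for some a ∈ S_n and some b ∈ Aut(T(S)); that is, Aut(Cay(S_n, S)) is the internal product of the image R(S_n) of the right regular representation and the subgroup λ(Aut(T(S))) = { x ↦ b⁻¹ * x : b ∈ Aut(T(S)) }, and these two subgroups intersect trivially. -/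
/-!
Normalise an automorphism `g` of the Cayley graph to `σ x = g x * (g 1)⁻¹`. Normality of the
right regular representation makes `σ` a group automorphism of `Sₙ`, and since `σ` fixes the
vertex `1` it permutes the neighbours `S` of `1`. Transpositions form one conjugacy class, so `σ`
maps every transposition to a transposition. The images of the `n - 1` transpositions moving a
point `i` pairwise fail to commute, hence pairwise share a point; conjugating one by another
shows that they all share one and the same point `b i`. Then `σ (swap i j) = swap (b i) (b j)`,
so `σ` is conjugation by `b`, and `b` is an automorphism of `T(S)` because `σ` preserves `S`.
Uniqueness of the factorisation and triviality of the intersection both reduce to the triviality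
of the centre of `Sₙ`.
-/

open Equiv

theorem Finite.exists_ne_ne_of_three_le_natCard {β : Type*} [Finite β]
    (hβ : 3 ≤ Nat.card β) (x y : β) : ∃ z, z ≠ x ∧ z ≠ y :=
  ENat.exists_ne_ne_of_three_le (by simpa [ENat.card_eq_coe_natCard] using hβ) x y

namespace Equiv.Perm

variable {α : Type*} [DecidableEq α]

theorem IsSwap.conj {τ : Perm α} (hτ : τ.IsSwap) (g : Perm α) : (g * τ * g⁻¹).IsSwap := by
  obtain ⟨x, y, hxy, rfl⟩ := hτ
  exact ⟨g x, g y, g.injective.ne hxy, (swap_apply_apply g x y).symm⟩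

theorem IsSwap.eq_swap_apply {τ : Perm α} (hτ : τ.IsSwap) {p : α} (hp : τ p ≠ p) :
    τ = swap p (τ p) := by
  obtain ⟨x, y, -, rfl⟩ := hτ
  rcases (swap_apply_ne_self_iff.1 hp).2 with rfl | rfl
  · rw [swap_apply_left]
  · rw [swap_apply_right, swap_comm]

theorem IsSwap.eq_swap_of_apply_ne {τ : Perm α} (hτ : τ.IsSwap) {x y : α} (hx : τ x ≠ x)
    (hy : τ y ≠ y) (hxy : x ≠ y) : τ = swap x y := by
  rw [hτ.eq_swap_apply hx] at hy ⊢
  rw [(swap_apply_ne_self_iff.1 hy).2.resolve_left hxy.symm]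

theorem center_eq_bot [Finite α] (hα : 3 ≤ Nat.card α) : Subgroup.center (Perm α) = ⊥ := by
  refine (Subgroup.eq_bot_iff_forall _).2 fun g hg => Equiv.ext fun x => ?_
  rw [Perm.one_apply]
  by_contra hgx
  obtain ⟨y, hyx, hyg⟩ := Finite.exists_ne_ne_of_three_le_natCard hα x (g x)
  have h := congr($(Subgroup.mem_center_iff.1 hg (swap x y)) x)
  rw [Perm.mul_apply, Perm.mul_apply, swap_apply_left, swap_apply_of_ne_of_ne hgx hyg.symm] at h
  exact hyx (g.injective h.symm)

variable (φ : Perm α ≃* Perm α)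

theorem isSwap_map_of_isSwap_map {t₀ : Perm α} (ht₀ : t₀.IsSwap) (hφt₀ : (φ t₀).IsSwap)
    {t : Perm α} (ht : t.IsSwap) : (φ t).IsSwap := by
  obtain ⟨x, y, hxy, rfl⟩ := ht₀
  obtain ⟨z, w, hzw, rfl⟩ := ht
  obtain ⟨c, hc⟩ := isConj_iff.1 (isConj_swap hxy hzw)
  rw [← hc]
  simpa only [map_mul, map_inv] using hφt₀.conj (φ c)

variable {φ}

theorem exists_map_swap_apply_ne_and {i j k : α} (hij : i ≠ j) (hik : i ≠ k) (hjk : j ≠ k) :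
    ∃ p, φ (swap i j) p ≠ p ∧ φ (swap i k) p ≠ p := by
  by_contra! h
  have hcomm : swap i j * swap i k = swap i k * swap i j :=
    φ.injective (by simpa only [map_mul] using (Perm.Disjoint.commute (f := φ (swap i j))
      fun p => or_iff_not_imp_left.2 (h p)).eq)
  have := congr($hcomm i)
  simp only [Perm.mul_apply, swap_apply_left, swap_apply_of_ne_of_ne hik.symm hjk.symm,
    swap_apply_of_ne_of_ne hij.symm hjk] at this
  exact hjk this.symm

variable (hφ : ∀ t : Perm α, t.IsSwap → (φ t).IsSwap)
include hφ

theorem map_swap_eq_swap_of_map_swap_eq {i j k p q r : α} (hik : i ≠ k) (hjk : j ≠ k)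
    (hq : φ (swap i j) = swap p q) (hr : φ (swap i k) = swap p r) : φ (swap j k) = swap q r := by
  have hpr : p ≠ r := swap_isSwap_iff.1 (hr ▸ hφ _ (swap_isSwap_iff.2 hik))
  have hqr : q ≠ r := by
    rintro rfl
    have := congr($(φ.injective (hq.trans hr.symm)) i)
    rw [swap_apply_left, swap_apply_left] at this
    exact hjk this
  calc φ (swap j k) = φ (swap i j * swap k i * swap i j) := by
        rw [swap_mul_swap_mul_swap hik.symm hjk.symm]
    _ = swap p q * swap r p * swap p q := by
        rw [map_mul, map_mul, hq, swap_comm k i, hr, swap_comm p r]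
    _ = swap q r := swap_mul_swap_mul_swap hpr.symm hqr.symm

theorem map_swap_apply_ne_of_map_swap_apply_ne {i j k l p : α} (hij : i ≠ j) (hik : i ≠ k)
    (hjk : j ≠ k) (hj : φ (swap i j) p ≠ p) (hk : φ (swap i k) p ≠ p) (hil : i ≠ l) :
    φ (swap i l) p ≠ p := by
  -- Otherwise `φ (swap i l)` meets `swap p q` and `swap p r` away from `p`, so it is
  -- `swap q r = φ (swap j k)`, whereas `swap i l` moves `i` and `swap j k` does not.
  intro hl
  have hjl : j ≠ l := by rintro rfl; exact hj hl
  have hkl : k ≠ l := by rintro rfl; exact hk hl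
  obtain ⟨q, hjq, hlq⟩ := exists_map_swap_apply_ne_and hij hil hjl
  obtain ⟨r, hkr, hlr⟩ := exists_map_swap_apply_ne_and hik hil hkl
  have hτ : ∀ m, i ≠ m → (φ (swap i m)).IsSwap := fun m h => hφ _ (swap_isSwap_iff.2 h)
  have hqp : p ≠ q := by rintro rfl; exact hlq hl
  have hrp : p ≠ r := by rintro rfl; exact hlr hl
  have hjk' : φ (swap j k) = swap q r := map_swap_eq_swap_of_map_swap_eq hφ hik hjk
    ((hτ j hij).eq_swap_of_apply_ne hj hjq hqp) ((hτ k hik).eq_swap_of_apply_ne hk hkr hrp)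
  have hqr : q ≠ r := by
    rintro rfl
    rw [swap_self, ← Perm.one_def, ← map_one φ] at hjk'
    exact hjk (swap_eq_one_iff.1 (φ.injective hjk'))
  have hil' : swap i l = swap j k :=
    φ.injective (((hτ l hil).eq_swap_of_apply_ne hlq hlr hqr).trans hjk'.symm)
  have := congr($hil' i)
  rw [swap_apply_left, swap_apply_of_ne_of_ne hij hik] at this
  exact hil this.symm

theorem exists_forall_map_swap_apply_ne [Finite α] (hα : 3 ≤ Nat.card α) (i : α) :
    ∃ p, ∀ j, i ≠ j → φ (swap i j) p ≠ p := by
  obtain ⟨j, hji, -⟩ := Finite.exists_ne_ne_of_three_le_natCard hα i i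
  obtain ⟨k, hki, hkj⟩ := Finite.exists_ne_ne_of_three_le_natCard hα i j
  obtain ⟨p, hj, hk⟩ := exists_map_swap_apply_ne_and hji.symm hki.symm hkj.symm
  exact ⟨p, fun l hil =>
    map_swap_apply_ne_of_map_swap_apply_ne hφ hji.symm hki.symm hkj.symm hj hk hil⟩

theorem map_swap_eq_swap_of_forall_map_swap_apply_ne [Finite α] (hα : 3 ≤ Nat.card α)
    {c : α → α} (hc : ∀ i j, i ≠ j → φ (swap i j) (c i) ≠ c i) {i j : α} (hij : i ≠ j) :
    φ (swap i j) = swap (c i) (c j) := by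
  have hcj : φ (swap i j) (c j) ≠ c j := swap_comm i j ▸ hc j i hij.symm
  refine (hφ _ (swap_isSwap_iff.2 hij)).eq_swap_of_apply_ne (hc i j hij) hcj fun h => ?_
  obtain ⟨k, hki, hkj⟩ := Finite.exists_ne_ne_of_three_le_natCard hα i j
  have hjk : φ (swap j k) = swap (φ (swap i j) (c i)) (φ (swap i k) (c i)) :=
    map_swap_eq_swap_of_map_swap_eq hφ hki.symm hkj.symm
      ((hφ _ (swap_isSwap_iff.2 hij)).eq_swap_apply (hc i j hij))
      ((hφ _ (swap_isSwap_iff.2 hki.symm)).eq_swap_apply (hc i k hki.symm))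
  apply hc j k hkj.symm
  rw [hjk, ← h, swap_apply_of_ne_of_ne (hc i j hij).symm (hc i k hki.symm).symm]

theorem exists_eq_conj_of_isSwap_map [Finite α] (hα : 3 ≤ Nat.card α) :
    ∃ b : Perm α, φ = MulAut.conj b := by
  choose c hc using exists_forall_map_swap_apply_ne hφ hα
  have hφc := fun i j (hij : i ≠ j) => map_swap_eq_swap_of_forall_map_swap_apply_ne hφ hα hc hij
  have hinj : c.Injective := fun i j h => by
    by_contra hij
    have hφij := hφc i j hij
    rw [h, swap_self, ← Perm.one_def, ← map_one φ] at hφij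
    exact hij (swap_eq_one_iff.1 (φ.injective hφij))
  refine ⟨Equiv.ofBijective c (Finite.injective_iff_bijective.1 hinj),
    MulEquiv.toMonoidHom_injective (MonoidHom.eq_of_eqOn_dense closure_isSwap ?_)⟩
  rintro _ ⟨i, j, hij, rfl⟩
  simp [hφc i j hij, MulAut.conj_apply, ← swap_apply_apply]

end Equiv.Perm

theorem eq_and_eq_of_forall_mul_mul_eq {G : Type*} [Group G] (hG : Subgroup.center G = ⊥)
    {a b a' b' : G} (h : ∀ x, b * x * a = b' * x * a') : b = b' ∧ a = a' := by
  have hc : ∀ x, b'⁻¹ * b * x = x * (a' * a⁻¹) := fun x =>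
    calc b'⁻¹ * b * x = b'⁻¹ * (b * x * a) * a⁻¹ := by group
      _ = b'⁻¹ * (b' * x * a') * a⁻¹ := by rw [h]
      _ = x * (a' * a⁻¹) := by group
  have hc1 : b'⁻¹ * b = a' * a⁻¹ := by simpa using hc 1
  have hcentral : b'⁻¹ * b ∈ Subgroup.center G :=
    Subgroup.mem_center_iff.2 fun x => by rw [hc, hc1]
  rw [hG, Subgroup.mem_bot] at hcentral
  exact ⟨(inv_mul_eq_one.1 hcentral).symm, (mul_inv_eq_one.1 (hc1 ▸ hcentral)).symm⟩

section Cayley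

variable {n : ℕ} {S : Set (Perm (Fin n))}

theorem cay_adj_one_iff (hS : ∀ s ∈ S, s.IsSwap) {x : Perm (Fin n)} :
    (Cay n S).Adj 1 x ↔ x ∈ S := by
  simp only [Cay, SimpleGraph.fromRel_adj, inv_one, mul_one, one_mul]
  constructor
  · rintro ⟨-, hx | hx⟩
    · exact hx
    · obtain ⟨a, b, -, hab⟩ := hS _ hx
      rwa [← inv_inv x, hab, swap_inv, ← hab]
  · exact fun hx => ⟨fun h => (hS x hx).isCycle.ne_one h.symm, Or.inl hx⟩

theorem rrep_le_graphAut_cay : Rrep n ≤ graphAut (Cay n S) := by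
  rintro _ ⟨a, rfl⟩ x y
  have hxy : y * a * (x * a)⁻¹ = y * x⁻¹ := by group
  have hyx : x * a * (y * a)⁻¹ = x * y⁻¹ := by group
  simp only [Cay, SimpleGraph.fromRel_adj, coe_mulRight, hxy, hyx, ne_eq, mul_left_inj]

theorem mem_graphAut_transGraph_of_conj {b : Perm (Fin n)} (hb : ∀ s, b * s * b⁻¹ ∈ S ↔ s ∈ S) :
    b ∈ graphAut (TransGraph n S) := by
  intro x y
  simp only [TransGraph, SimpleGraph.fromRel_adj, b.injective.ne_iff, swap_apply_apply, hb]

theorem map_mul_of_subgroupOf_normal {A : Subgroup (Perm (Perm (Fin n)))} (hRA : Rrep n ≤ A)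
    (hnormal : ((Rrep n).subgroupOf A).Normal) {σ : Perm (Perm (Fin n))} (hσ : σ ∈ A)
    (hσ1 : σ 1 = 1) (x y : Perm (Fin n)) : σ (x * y) = σ x * σ y := by
  have hy : Equiv.mulRight y ∈ Rrep n := ⟨y, rfl⟩
  obtain ⟨c, hc⟩ : σ * Equiv.mulRight y * σ⁻¹ ∈ Rrep n := Subgroup.mem_subgroupOf.1
    (hnormal.conj_mem ⟨_, hRA hy⟩ (Subgroup.mem_subgroupOf.2 hy) ⟨σ, hσ⟩)
  have hσy : ∀ z, σ (z * y) = σ z * c := fun z => by simpa using congr($hc (σ z))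
  have hc1 := hσy 1
  rw [one_mul, hσ1, one_mul] at hc1
  rw [hσy, hc1]

theorem exists_conj_of_mem_graphAut_cay (hn : 3 ≤ n) (hS : ∀ s ∈ S, s.IsSwap)
    (hgen : Subgroup.closure S = ⊤) (hnormal : ((Rrep n).subgroupOf (graphAut (Cay n S))).Normal)
    {g : Perm (Perm (Fin n))} (hg : g ∈ graphAut (Cay n S)) :
    ∃ b ∈ graphAut (TransGraph n S), ∀ x, g x = b * x * b⁻¹ * g 1 := by
  set σ := Equiv.mulRight (g 1)⁻¹ * g with hσ_def
  have hσ : σ ∈ graphAut (Cay n S) := mul_mem (rrep_le_graphAut_cay ⟨_, rfl⟩) hg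
  have hσ1 : σ 1 = 1 := mul_inv_cancel (g 1)
  let φ : Perm (Fin n) ≃* Perm (Fin n) := MulEquiv.mk' σ <|
    map_mul_of_subgroupOf_normal rrep_le_graphAut_cay hnormal hσ hσ1
  have hφS : ∀ s, φ s ∈ S ↔ s ∈ S := fun s => by
    rw [← cay_adj_one_iff hS, ← cay_adj_one_iff hS, ← hσ 1 s, hσ1]
    rfl
  obtain ⟨s₀, hs₀⟩ : S.Nonempty := Set.nonempty_iff_ne_empty.2 fun h => by
    rw [h, Subgroup.closure_empty] at hgen
    have : Nontrivial (Fin n) := Fin.nontrivial_iff_two_le.2 (by omega)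
    exact bot_ne_top hgen
  obtain ⟨b, hb⟩ := Perm.exists_eq_conj_of_isSwap_map
    (fun t ht => Perm.isSwap_map_of_isSwap_map φ (hS s₀ hs₀) (hS _ ((hφS s₀).2 hs₀)) ht)
    (by simpa using hn)
  have hσb : ∀ x, σ x = b * x * b⁻¹ := fun x => by rw [← MulAut.conj_apply, ← hb]; rfl
  refine ⟨b, mem_graphAut_transGraph_of_conj fun s => ?_, fun x => ?_⟩
  · rw [← hσb, ← hφS s]
    rfl
  · rw [← hσb, hσ_def, Perm.mul_apply, coe_mulRight, inv_mul_cancel_right]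

end Cayley

/-- Let `n ≥ 3` and let `S` be a set of transpositions generating `Sₙ`
such that `Cay(Sₙ, S)` is normal. Then every automorphism `g` of `Cay(Sₙ, S)` can be
written uniquely as `x ↦ b⁻¹ * x * a` with `a ∈ Sₙ` and `b ∈ Aut(T(S))`; that is,
`Aut(Cay(Sₙ, S))` is the internal product of `R(Sₙ)` and `λ(Aut(T(S)))`, and these
two subgroups intersect trivially. -/
theorem aut_cayley_unique_factorization (n : ℕ) (hn : 3 ≤ n)
    (S : Set (Equiv.Perm (Fin n)))
    (hS : ∀ s ∈ S, Equiv.Perm.IsSwap s)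
    (hgen : Subgroup.closure S = ⊤)
    (hnormal : ((Rrep n).subgroupOf (graphAut (Cay n S))).Normal) :
    (∀ g ∈ graphAut (Cay n S),
      ∃! p : Equiv.Perm (Fin n) × Equiv.Perm (Fin n),
        p.2 ∈ graphAut (TransGraph n S) ∧ ∀ x, g x = p.2⁻¹ * x * p.1) ∧
      Rrep n ⊓ Lrep n S = ⊥ := by
  have hcenter : Subgroup.center (Perm (Fin n)) = ⊥ := Perm.center_eq_bot (by simpa using hn)
  refine ⟨fun g hg => ?_, ?_⟩
  · obtain ⟨b, hb, hgb⟩ := exists_conj_of_mem_graphAut_cay hn hS hgen hnormal hg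
    have hg' : ∀ x, g x = b⁻¹⁻¹ * x * (b⁻¹ * g 1) := fun x => by rw [hgb]; group
    refine ⟨(b⁻¹ * g 1, b⁻¹), ⟨inv_mem hb, hg'⟩, ?_⟩
    rintro ⟨a', b'⟩ ⟨-, h⟩
    obtain ⟨hb', ha'⟩ := eq_and_eq_of_forall_mul_mul_eq hcenter fun x => (h x).symm.trans (hg' x)
    exact Prod.ext ha' (inv_injective hb')
  · refine (Subgroup.eq_bot_iff_forall _).2 ?_
    rintro _ ⟨⟨a, rfl⟩, ⟨c, -, hc⟩⟩
    obtain ⟨-, ha⟩ := eq_and_eq_of_forall_mul_mul_eq hcenter (b := 1) (a' := 1) (b' := c⁻¹)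
      fun x => by simpa using congr($hc x)
    rw [ha]
    rfl
end
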